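/- arXiv:math/0407065 — 4 statements merged into one kernel-verified Lean document; each statement's English description precedes it below -/
import Mathlib

section
/- Let g be a finite-dimensional Lie algebra over an algebraically closed field of characteristic zero, with an involutive automorphism τ giving the decomposition g = h₀ ⊕ h₁ into the +1 and −1 eigenspaces. For γ in the dual of h₀, let γ̂ be the skew-symmetric bilinear form on h₁ defined by γ̂(ξ,η) = γ([ξ,η]). Then ind g ≤ ind h₀ + min over γ ∈ h₀* of dim(Ker γ̂), where ind denotes the index, the minimal dimension of a coadjoint stabilizer. -/
open Module

/-- Stabiliser of a linear functional under the coadjoint representation. -/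
def coadStab (K L : Type*) [Field K] [LieRing L] [LieAlgebra K L] (α : Module.Dual K L) :
    Submodule K L where
  carrier := {x | ∀ y, α ⁅x, y⁆ = 0}
  add_mem' := by intro a b ha hb y; rw [Set.mem_setOf_eq] at *; rw [add_lie, map_add, ha, hb, add_zero]
  zero_mem' := by intro y; rw [zero_lie, map_zero]
  smul_mem' := by intro c x hx y; rw [Set.mem_setOf_eq] at *; rw [smul_lie, map_smul, hx, smul_zero]

/-- The index of a Lie algebra: the minimal dimension of a coadjoint stabiliser. -/
noncomputable def lieIndex (K L : Type*) [Field K] [LieRing L] [LieAlgebra K L] : ℕ :=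
  ⨅ α : Module.Dual K L, finrank K (coadStab K L α)

/-- The kernel of the skew-symmetric form `γ̂(ξ,η) = γ⁅ξ,η⁆` on the subspace `h₁`. -/
def formKer (K L : Type*) [Field K] [LieRing L] [LieAlgebra K L]
    (h₁ : Submodule K L) (γ : Module.Dual K L) : Submodule K L where
  carrier := {ξ | ξ ∈ h₁ ∧ ∀ η ∈ h₁, γ ⁅ξ, η⁆ = 0}
  add_mem' := by
    intro a b ha hb
    exact ⟨h₁.add_mem ha.1 hb.1, fun η hη => by
      rw [add_lie, map_add, ha.2 η hη, hb.2 η hη, add_zero]⟩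
  zero_mem' := ⟨h₁.zero_mem, fun η hη => by rw [zero_lie, map_zero]⟩
  smul_mem' := by
    intro c x hx
    exact ⟨h₁.smul_mem c hx.1, fun η hη => by rw [smul_lie, map_smul, hx.2 η hη, smul_zero]⟩

open Matrix Polynomial LinearMap in
lemma ker_semicont {K V W : Type*} [Field K] [AddCommGroup V] [Module K V]
    [AddCommGroup W] [Module K W] [FiniteDimensional K V] [FiniteDimensional K W]
    (A B : V →ₗ[K] W) (t₀ : K) :
    ∃ s : Finset K, ∀ t ∉ s, finrank K (LinearMap.ker (A + t • B)) ≤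
      finrank K (LinearMap.ker (A + t₀ • B)) := by
  classical
  set r := finrank K (LinearMap.range (A + t₀ • B)) with hr
  let b : Basis (Fin r) K (LinearMap.range (A + t₀ • B)) := finBasis K _
  have hx : ∀ i, ∃ x : V, (A + t₀ • B) x = (b i : W) := fun i => (b i).2
  choose x hxs using hx
  obtain ⟨q, hq⟩ := Submodule.exists_isCompl (LinearMap.range (A + t₀ • B))
  let pr := (LinearMap.range (A + t₀ • B)).linearProjOfIsCompl q hq
  let g : Fin r → (W →ₗ[K] K) := fun j => (b.coord j).comp pr
  let Mp : Matrix (Fin r) (Fin r) K[X] :=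
    Matrix.of fun i j => Polynomial.C (g j (A (x i))) + X * Polynomial.C (g j (B (x i)))
  have hEval : ∀ t : K, (Mp.det).eval t =
      (Matrix.of fun i j => g j ((A + t • B) (x i))).det := by
    intro t
    have := RingHom.map_det (evalRingHom t) Mp
    rw [coe_evalRingHom] at this
    rw [this]
    congr 1
    ext i j
    simp only [RingHom.mapMatrix_apply, Matrix.map_apply, Matrix.of_apply, Mp, coe_evalRingHom,
      eval_add, eval_mul, eval_C, eval_X, LinearMap.add_apply, LinearMap.smul_apply, map_add,
      _root_.map_smul, smul_eq_mul]
  have hdiag : ∀ i j, g j ((A + t₀ • B) (x i)) = if i = j then 1 else 0 := by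
    intro i j
    rw [hxs i]
    have hpr : pr (b i : W) = b i := Submodule.linearProjOfIsCompl_apply_left hq (b i)
    simp only [g, LinearMap.comp_apply, hpr, Basis.coord_apply, Basis.repr_self]
    rw [Finsupp.single_apply]
  have hev0 : (Mp.det).eval t₀ = 1 := by
    rw [hEval t₀]
    have : (Matrix.of fun i j => g j ((A + t₀ • B) (x i))) = (1 : Matrix (Fin r) (Fin r) K) := by
      ext i j
      rw [Matrix.of_apply, hdiag, Matrix.one_apply]
    rw [this, Matrix.det_one]
  have hp0 : Mp.det ≠ 0 := fun h => by simp [h] at hev0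
  refine ⟨(Mp.det).roots.toFinset, fun t ht => ?_⟩
  have hdet : (Matrix.of fun i j => g j ((A + t • B) (x i))).det ≠ 0 := by
    rw [← hEval]
    intro h
    exact ht (Multiset.mem_toFinset.mpr ((Polynomial.mem_roots hp0).mpr h))
  -- linear independence
  have hli : LinearIndependent K (fun i => (A + t • B) (x i)) := by
    rw [Fintype.linearIndependent_iff]
    intro c hc
    have hv : c ᵥ* (Matrix.of fun i j => g j ((A + t • B) (x i))) = 0 := by
      funext j
      have : g j (∑ i, c i • (A + t • B) (x i)) = 0 := by rw [hc, map_zero]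
      simpa [Matrix.vecMul, dotProduct, smul_eq_mul, mul_add, mul_assoc] using this
    have := Matrix.eq_zero_of_vecMul_eq_zero hdet hv
    exact fun i => congrFun this i
  have hrank : r ≤ finrank K (LinearMap.range (A + t • B)) := by
    have hle : Submodule.span K (Set.range fun i => (A + t • B) (x i)) ≤
        LinearMap.range (A + t • B) := by
      rw [Submodule.span_le]
      rintro _ ⟨i, rfl⟩
      exact LinearMap.mem_range_self _ _
    have := finrank_span_eq_card hli
    calc r = finrank K (Submodule.span K (Set.range fun i => (A + t • B) (x i))) := by
            rw [this, Fintype.card_fin]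
      _ ≤ _ := Submodule.finrank_mono hle
  have h1 := LinearMap.finrank_range_add_finrank_ker (A + t • B)
  have h2 := LinearMap.finrank_range_add_finrank_ker (A + t₀ • B)
  omega


section Aux
variable (K : Type*) {L : Type*} [Field K] [LieRing L] [LieAlgebra K L]

/-- The bilinear form `(ξ, η) ↦ δ ⁅ξ, η⁆` on a subspace `p`, as a map `p →ₗ Dual p`. -/
noncomputable def Tform (p : Submodule K L) (δ : Module.Dual K L) :
    p →ₗ[K] Module.Dual K p :=
  LinearMap.mk₂ K (fun x y => δ ⁅(x : L), (y : L)⁆)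
    (fun x x' y => by simp [add_lie])
    (fun c x y => by simp [smul_lie])
    (fun x y y' => by simp [lie_add])
    (fun c x y => by simp [lie_smul])

lemma Tform_apply (p : Submodule K L) (δ : Module.Dual K L) (x y : p) :
    Tform K p δ x y = δ ⁅(x : L), (y : L)⁆ := rfl

lemma Tform_add (p : Submodule K L) (δ ε : Module.Dual K L) :
    Tform K p (δ + ε) = Tform K p δ + Tform K p ε := by
  ext x y; simp [Tform_apply]

lemma Tform_smul (p : Submodule K L) (c : K) (δ : Module.Dual K L) :
    Tform K p (c • δ) = c • Tform K p δ := by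
  ext x y; simp [Tform_apply]
end Aux

lemma formKer_eq_map (K : Type*) {L : Type*} [Field K] [LieRing L] [LieAlgebra K L]
    (p : Submodule K L) (δ : Module.Dual K L) :
    formKer K L p δ = (LinearMap.ker (Tform K p δ)).map p.subtype := by
  ext x
  constructor
  · rintro ⟨hx, hf⟩
    exact ⟨⟨x, hx⟩, LinearMap.ext fun η => hf η η.2, rfl⟩
  · rintro ⟨⟨x, hx⟩, hk, rfl⟩
    exact ⟨hx, fun η hη => LinearMap.ext_iff.mp hk ⟨η, hη⟩⟩

lemma finrank_formKer (K : Type*) {L : Type*} [Field K] [LieRing L] [LieAlgebra K L]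
    (p : Submodule K L) (δ : Module.Dual K L) :
    finrank K (formKer K L p δ) = finrank K (LinearMap.ker (Tform K p δ)) := by
  rw [formKer_eq_map, Submodule.finrank_map_subtype_eq]

/-- for a finite-dimensional Lie algebra `L` over an algebraically closed field of
characteristic zero with an involutive automorphism `τ` and eigenspace decomposition
`L = h₀ ⊕ h₁`, one has `ind L ≤ ind h₀ + min_{γ ∈ h₀*} dim (Ker γ̂)`. -/
theorem stmt_0 (K L : Type*) [Field K] [IsAlgClosed K] [CharZero K]
    [LieRing L] [LieAlgebra K L] [FiniteDimensional K L]
    (τ : L ≃ₗ⁅K⁆ L) (hτ : ∀ x, τ (τ x) = x)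
    (h₀ : LieSubalgebra K L) (hh₀ : ∀ x, x ∈ h₀ ↔ τ x = x)
    (h₁ : Submodule K L) (hh₁ : ∀ x, x ∈ h₁ ↔ τ x = -x) :
    lieIndex K L ≤ lieIndex K h₀ +
      sInf {m : ℕ | ∃ γ : Module.Dual K L, (∀ x ∈ h₁, γ x = 0) ∧
        m = finrank K (formKer K L h₁ γ)} := by
  classical
  have hadd : ∀ a b : L, τ (a + b) = τ a + τ b := fun a b => τ.toLinearEquiv.map_add a b
  have hsub : ∀ a b : L, τ (a - b) = τ a - τ b := fun a b => τ.toLinearEquiv.map_sub a b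
  have hsmul : ∀ (c : K) (a : L), τ (c • a) = c • τ a := fun c a => τ.toLinearEquiv.map_smul c a
  -- bracket relations
  have hb01 : ∀ x ∈ h₀, ∀ y ∈ h₁, ⁅x, y⁆ ∈ h₁ := by
    intro x hx y hy
    rw [hh₁] at hy ⊢
    rw [hh₀] at hx
    rw [LieEquiv.map_lie, hx, hy, lie_neg]
  have hb10 : ∀ x ∈ h₁, ∀ y ∈ h₀, ⁅x, y⁆ ∈ h₁ := by
    intro x hx y hy
    rw [← lie_skew]
    exact h₁.neg_mem (hb01 y hy x hx)
  have hb11 : ∀ x ∈ h₁, ∀ y ∈ h₁, ⁅x, y⁆ ∈ h₀ := by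
    intro x hx y hy
    rw [hh₁] at hx hy
    rw [hh₀, LieEquiv.map_lie, hx, hy, neg_lie, lie_neg, neg_neg]
  have hcompl : IsCompl h₀.toSubmodule h₁ := by
    constructor
    · rw [Submodule.disjoint_def]
      intro x hx0 hx1
      rw [LieSubalgebra.mem_toSubmodule, hh₀] at hx0
      rw [hh₁] at hx1
      have h2 : (2 : K) • x = 0 := by
        rw [two_smul]
        rw [hx0] at hx1
        exact add_eq_zero_iff_eq_neg.mpr hx1
      rcases smul_eq_zero.mp h2 with h | h
      · exact absurd h two_ne_zero
      · exact h
    · rw [codisjoint_iff, eq_top_iff]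
      intro x _
      have ha : (2 : K)⁻¹ • (x + τ x) ∈ h₀.toSubmodule := by
        rw [LieSubalgebra.mem_toSubmodule, hh₀, hsmul, hadd, hτ, add_comm]
      have hb : (2 : K)⁻¹ • (x - τ x) ∈ h₁ := by
        rw [hh₁, hsmul, hsub, hτ, ← smul_neg, neg_sub]
      refine Submodule.mem_sup.mpr ⟨_, ha, _, hb, ?_⟩
      rw [← smul_add]
      have : x + τ x + (x - τ x) = (2 : K) • x := by rw [two_smul]; abel
      rw [this, smul_smul, inv_mul_cancel₀ (two_ne_zero), one_smul]
  -- decomposition of the stabiliser for functionals vanishing on h₁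
  have hdec : ∀ δ : Module.Dual K L, (∀ x ∈ h₁, δ x = 0) →
      finrank K (coadStab K L δ) =
        finrank K (formKer K L h₀.toSubmodule δ) + finrank K (formKer K L h₁ δ) := by
    intro δ hδ
    have heq : coadStab K L δ = formKer K L h₀.toSubmodule δ ⊔ formKer K L h₁ δ := by
      apply le_antisymm
      · intro x hx
        obtain ⟨a, ha, b, hb, rfl⟩ := Submodule.mem_sup.mp
          (by rw [hcompl.sup_eq_top]; exact Submodule.mem_top : (x : L) ∈ h₀.toSubmodule ⊔ h₁)
        rw [LieSubalgebra.mem_toSubmodule] at ha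
        apply Submodule.add_mem_sup
        · refine ⟨by rwa [LieSubalgebra.mem_toSubmodule], fun y hy => ?_⟩
          rw [LieSubalgebra.mem_toSubmodule] at hy
          have h1 := hx y
          rw [add_lie, map_add] at h1
          have h2 : δ ⁅b, y⁆ = 0 := hδ _ (hb10 b hb y hy)
          rw [h2, add_zero] at h1
          exact h1
        · refine ⟨hb, fun η hη => ?_⟩
          have h1 := hx η
          rw [add_lie, map_add] at h1
          have h2 : δ ⁅a, η⁆ = 0 := hδ _ (hb01 a ha η hη)
          rw [h2, zero_add] at h1
          exact h1
      · apply sup_le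
        · rintro x ⟨hx, hf⟩
          rw [LieSubalgebra.mem_toSubmodule] at hx
          intro y
          obtain ⟨a, ha, b, hb, rfl⟩ := Submodule.mem_sup.mp
            (by rw [hcompl.sup_eq_top]; exact Submodule.mem_top : (y : L) ∈ h₀.toSubmodule ⊔ h₁)
          rw [lie_add, map_add, hf a ha, hδ _ (hb01 x hx b hb), add_zero]
        · rintro x ⟨hx, hf⟩
          intro y
          obtain ⟨a, ha, b, hb, rfl⟩ := Submodule.mem_sup.mp
            (by rw [hcompl.sup_eq_top]; exact Submodule.mem_top : (y : L) ∈ h₀.toSubmodule ⊔ h₁)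
          rw [LieSubalgebra.mem_toSubmodule] at ha
          rw [lie_add, map_add, hf b hb, hδ _ (hb10 x hx a ha), zero_add]
    have hdisj : Disjoint (formKer K L h₀.toSubmodule δ) (formKer K L h₁ δ) := by
      apply hcompl.disjoint.mono
      · intro x hx; exact hx.1
      · intro x hx; exact hx.1
    have := Submodule.finrank_sup_add_finrank_inf_eq
      (formKer K L h₀.toSubmodule δ) (formKer K L h₁ δ)
    rw [hdisj.eq_bot, finrank_bot] at this
    rw [heq]
    omega
  -- pick γ achieving the sInf
  set S : Set ℕ := {m : ℕ | ∃ γ : Module.Dual K L, (∀ x ∈ h₁, γ x = 0) ∧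
      m = finrank K (formKer K L h₁ γ)} with hSdef
  have hSne : S.Nonempty := ⟨finrank K (formKer K L h₁ 0), 0, fun x _ => rfl, rfl⟩
  obtain ⟨γ, hγ1, hγm⟩ := Nat.sInf_mem hSne
  -- pick β achieving lieIndex K h₀
  have hne : Nonempty (Module.Dual K h₀) := ⟨0⟩
  obtain ⟨β, hβ⟩ := Nat.sInf_mem
    (Set.range_nonempty (fun α : Module.Dual K h₀ => finrank K (coadStab K h₀ α)))
  have hβ' : finrank K (coadStab K h₀ β) = lieIndex K h₀ := hβ
  -- extend β to L, vanishing on h₁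
  set pr : L →ₗ[K] h₀.toSubmodule := h₀.toSubmodule.linearProjOfIsCompl h₁ hcompl with hprdef
  set βt : Module.Dual K L := (β : Module.Dual K h₀.toSubmodule).comp pr with hβtdef
  have hβt1 : ∀ x ∈ h₁, βt x = 0 := by
    intro x hx
    have h3 : pr x = 0 := Submodule.linearProjOfIsCompl_apply_right hcompl ⟨x, hx⟩
    calc βt x = β (pr x) := rfl
      _ = β 0 := by rw [h3]
      _ = 0 := map_zero β
  have hβt0 : ∀ x : h₀.toSubmodule, βt x = β x := by
    intro x
    have h3 : pr x = x := Submodule.linearProjOfIsCompl_apply_left hcompl x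
    calc βt x = β (pr x) := rfl
      _ = β x := by rw [h3]
  -- the kernel of the form associated to βt on h₀ is the coadjoint stabiliser of β
  have hker0 : LinearMap.ker (Tform K h₀.toSubmodule βt) = coadStab K h₀ β := by
    ext x
    rw [LinearMap.mem_ker]
    let x' : h₀ := ⟨x.1, x.2⟩
    have key : ∀ y : h₀, Tform K h₀.toSubmodule βt x y = β ⁅x', y⁆ := by
      intro y
      have h2 := hβt0 (⁅x', y⁆ : h₀)
      calc Tform K h₀.toSubmodule βt x y = βt ⁅(x' : L), (y : L)⁆ := rfl
        _ = βt ((⁅x', y⁆ : h₀) : L) := rfl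
        _ = β ⁅x', y⁆ := h2
    constructor
    · intro h y
      have h1 := LinearMap.ext_iff.mp h y
      rw [key y] at h1
      exact h1
    · intro h
      apply LinearMap.ext
      intro y
      rw [LinearMap.zero_apply, key y]
      exact h y
  -- semicontinuity along the pencil
  obtain ⟨s₁, hs₁⟩ := ker_semicont (Tform K h₀.toSubmodule βt) (Tform K h₀.toSubmodule γ) 0
  obtain ⟨s₂, hs₂⟩ := ker_semicont (Tform K h₁ γ) (Tform K h₁ βt) 0
  obtain ⟨u, hu⟩ := Infinite.exists_notMem_finset (s₂ ∪ {0} ∪ s₁.image (·⁻¹))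
  have hu0 : u ≠ 0 := by
    intro h
    exact hu (by simp [h])
  have hus₂ : u ∉ s₂ := fun h => hu (by simp [h])
  set t : K := u⁻¹ with htdef
  have ht0 : t ≠ 0 := inv_ne_zero hu0
  have hts₁ : t ∉ s₁ := by
    intro h
    exact hu (by
      apply Finset.mem_union_right
      exact Finset.mem_image.mpr ⟨t, h, by rw [htdef, inv_inv]⟩)
  set δ : Module.Dual K L := βt + t • γ with hδdef
  have hδ1 : ∀ x ∈ h₁, δ x = 0 := by
    intro x hx
    simp only [hδdef, LinearMap.add_apply, LinearMap.smul_apply, hβt1 x hx, hγ1 x hx,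
      smul_zero, add_zero]
  -- bound for the h₀ part
  have hf : finrank K (LinearMap.ker (Tform K h₀.toSubmodule δ)) ≤ lieIndex K h₀ := by
    have h1 : Tform K h₀.toSubmodule δ =
        Tform K h₀.toSubmodule βt + t • Tform K h₀.toSubmodule γ := by
      rw [hδdef, Tform_add, Tform_smul]
    have h2 := hs₁ t hts₁
    rw [zero_smul, add_zero, hker0] at h2
    rw [h1]
    exact h2.trans_eq hβ'
  -- bound for the h₁ part
  have hg : finrank K (LinearMap.ker (Tform K h₁ δ)) ≤ sInf S := by
    have htu : t * u = 1 := by rw [htdef]; exact inv_mul_cancel₀ hu0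
    have h1 : Tform K h₁ δ = t • (Tform K h₁ γ + u • Tform K h₁ βt) := by
      rw [hδdef, Tform_add, Tform_smul, smul_add, smul_smul, htu, one_smul, add_comm]
    have h2 := hs₂ u hus₂
    rw [zero_smul, add_zero] at h2
    rw [h1, LinearMap.ker_smul _ t ht0]
    refine h2.trans ?_
    rw [← finrank_formKer, ← hγm]
  -- combine
  have hstab := hdec δ hδ1
  have hle : lieIndex K L ≤ finrank K (coadStab K L δ) :=
    ciInf_le (OrderBot.bddBelow _) δ
  rw [hstab, finrank_formKer, finrank_formKer] at hle
  have := add_le_add hf hg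
  omega
end

section
/- Let e ∈ gl(V) be nilpotent with k Jordan blocks of sizes d₁+1,…,d_k+1, over a field K with at least k elements. Choose pairwise distinct nonzero scalars a₁,…,a_k ∈ K and define α ∈ z(e)* by α(φ) = Σᵢ aᵢ · cᵢ^{i,dᵢ}(φ), where cᵢ^{j,s}(φ) are the coordinates of φ in the basis ξ_i^{j,s}. Then the coadjoint stabilizer z(e)_α consists exactly of the elements of z(e) that preserve each Jordan block subspace, i.e., z(e)_α is the span of the vectors ξ_i^{i,s} (1 ≤ i ≤ k, 0 ≤ s ≤ d_i). -/
open Module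
attribute [local instance] LieRing.ofAssociativeRing

/-- The centraliser of an element of a Lie algebra, as a Lie subalgebra. -/
def centIn (K L : Type*) [Field K] [LieRing L] [LieAlgebra K L] (x : L) :
    LieSubalgebra K L where
  carrier := {y | ⁅y, x⁆ = 0}
  add_mem' := by intro a b ha hb; rw [Set.mem_setOf_eq] at *; rw [add_lie, ha, hb, add_zero]
  zero_mem' := by rw [Set.mem_setOf_eq, zero_lie]
  smul_mem' := by intro c a ha; rw [Set.mem_setOf_eq] at *; rw [smul_lie, ha, smul_zero]
  lie_mem' := by
    intro a b ha hb; rw [Set.mem_setOf_eq] at *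
    rw [lie_lie, ha, hb, lie_zero, lie_zero, sub_zero]

section Aux
variable {K V : Type*} [Field K] [AddCommGroup V] [Module K V]
  {e : Module.End K V} {k : ℕ} {d : Fin k → ℕ} {w : Fin k → V}
  (b : Basis (Σ i : Fin k, Fin (d i + 1)) K V)
  (hb : ∀ i (s : Fin (d i + 1)), b ⟨i, s⟩ = (e ^ (s : ℕ)) (w i))
  (hnil : ∀ i, (e ^ (d i + 1)) (w i) = 0)

include hb hnil in
lemma epow_w (i : Fin k) (n : ℕ) :
    (e ^ n) (w i) = if h : n ≤ d i then b ⟨i, ⟨n, by omega⟩⟩ else 0 := by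
  split_ifs with h
  · exact (hb i ⟨n, by omega⟩).symm
  · have h2 : n = (n - (d i + 1)) + (d i + 1) := by omega
    rw [h2, pow_add, Module.End.mul_apply, hnil, map_zero]

include hb hnil in
lemma coord_epow_w (i j : Fin k) (n : ℕ) :
    b.repr ((e ^ n) (w j)) ⟨i, Fin.last (d i)⟩ = if j = i ∧ n = d i then 1 else 0 := by
  rw [epow_w b hb hnil]
  split_ifs with h1 h2 h2
  · obtain ⟨rfl, rfl⟩ := h2
    rw [b.repr_self_apply, if_pos]
    ext
    · rfl
    · simp [Fin.last]
  · rw [b.repr_self_apply, if_neg]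
    intro hEq
    apply h2
    obtain ⟨rfl, hs⟩ := Sigma.mk.inj_iff.mp hEq
    refine ⟨rfl, ?_⟩
    have := congrArg Fin.val (eq_of_heq hs)
    simpa [Fin.last] using this
  · obtain ⟨rfl, rfl⟩ := h2
    omega
  · simp

include hb hnil in
lemma keyT (i : Fin k) (t : ℕ) (v : V) :
    b.repr ((e ^ t) v) ⟨i, Fin.last (d i)⟩ =
      if h : t ≤ d i then b.repr v ⟨i, ⟨d i - t, by omega⟩⟩ else 0 := by
  have hmain : (b.coord ⟨i, Fin.last (d i)⟩).comp (e ^ t)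
      = (if h : t ≤ d i then b.coord ⟨i, ⟨d i - t, by omega⟩⟩ else (0 : V →ₗ[K] K)) := by
    apply b.ext
    rintro ⟨j, s⟩
    rw [LinearMap.comp_apply, Basis.coord_apply]
    conv_lhs => rw [hb j s, ← Module.End.mul_apply, ← pow_add]
    rw [coord_epow_w b hb hnil]
    split_ifs with h1 h2 h2
    · obtain ⟨rfl, hst⟩ := h1
      have hs : s = ⟨d j - t, by omega⟩ := by
        apply Fin.ext; simp; omega
      rw [hs, Basis.coord_apply, b.repr_self_apply, if_pos rfl]
    · obtain ⟨rfl, hst⟩ := h1; omega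
    · rw [Basis.coord_apply, b.repr_self_apply, if_neg]
      intro hEq
      apply h1
      obtain ⟨rfl, hs⟩ := Sigma.mk.inj_iff.mp hEq
      have := congrArg Fin.val (eq_of_heq hs)
      exact ⟨rfl, by simp at this; omega⟩
    · rfl
  have h2 := DFunLike.congr_fun hmain v
  rw [LinearMap.comp_apply, Basis.coord_apply] at h2
  rw [h2]
  split_ifs with h
  · rw [Basis.coord_apply]
  · rfl

lemma cent_comm (ψ : centIn K (Module.End K V) e) (n : ℕ) (v : V) :
    (ψ : Module.End K V) ((e ^ n) v) = (e ^ n) ((ψ : Module.End K V) v) := by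
  have h0 : ⁅(ψ : Module.End K V), e⁆ = 0 := ψ.2
  rw [Ring.lie_def, sub_eq_zero] at h0
  have h : Commute (ψ : Module.End K V) (e ^ n) := (Commute.pow_right h0 n)
  calc (ψ : Module.End K V) ((e ^ n) v) = ((ψ : Module.End K V) * e ^ n) v := rfl
    _ = (e ^ n * (ψ : Module.End K V)) v := by rw [h]
    _ = (e ^ n) ((ψ : Module.End K V) v) := rfl

include hb in
lemma cent_apply (ψ : centIn K (Module.End K V) e) (v : V) :
    (ψ : Module.End K V) v =
      ∑ p : Σ i : Fin k, Fin (d i + 1),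
        b.repr v p • (e ^ (p.2 : ℕ)) ((ψ : Module.End K V) (w p.1)) := by
  nth_rewrite 1 [← b.sum_repr v]
  rw [map_sum]
  refine Finset.sum_congr rfl fun p _ => ?_
  rw [map_smul]
  congr 1
  calc (ψ : Module.End K V) (b p) = (ψ : Module.End K V) ((e ^ (p.2 : ℕ)) (w p.1)) := by
        rw [← hb p.1 p.2]
    _ = (e ^ (p.2 : ℕ)) ((ψ : Module.End K V) (w p.1)) := cent_comm ψ _ _

include hb hnil in
lemma cent_coord (ψ : centIn K (Module.End K V) e) (v : V) (i : Fin k) :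
    b.repr ((ψ : Module.End K V) v) ⟨i, Fin.last (d i)⟩ =
      ∑ p : Σ i : Fin k, Fin (d i + 1), b.repr v p *
        (if h : (p.2 : ℕ) ≤ d i then
          b.repr ((ψ : Module.End K V) (w p.1)) ⟨i, ⟨d i - (p.2 : ℕ), by omega⟩⟩ else 0) := by
  rw [← Basis.coord_apply, cent_apply b hb ψ v, map_sum]
  refine Finset.sum_congr rfl fun p _ => ?_
  rw [map_smul, smul_eq_mul, Basis.coord_apply, keyT b hb hnil]

include hb in
lemma mem_span_iff (i : Fin k) (v : V) :
    v ∈ Submodule.span K (Set.range fun s : Fin (d i + 1) => (e ^ (s : ℕ)) (w i)) ↔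
      ∀ q : Σ i : Fin k, Fin (d i + 1), q.1 ≠ i → b.repr v q = 0 := by
  constructor
  · intro hv q hq
    have hle : Submodule.span K (Set.range fun s : Fin (d i + 1) => (e ^ (s : ℕ)) (w i))
        ≤ LinearMap.ker (b.coord q) := by
      rw [Submodule.span_le]
      rintro _ ⟨s, rfl⟩
      simp only [SetLike.mem_coe, LinearMap.mem_ker, Basis.coord_apply]
      rw [← hb i s, b.repr_self_apply, if_neg]
      intro hEq
      exact hq ((congrArg Sigma.fst hEq).symm)
    simpa [Basis.coord_apply] using hle hv
  · intro hv
    rw [← b.sum_repr v]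
    apply Submodule.sum_mem
    rintro ⟨p1, p2⟩ _
    by_cases hp : p1 = i
    · subst hp
      apply Submodule.smul_mem
      exact Submodule.subset_span ⟨p2, (hb p1 p2).symm⟩
    · rw [hv ⟨p1, p2⟩ hp, zero_smul]
      exact Submodule.zero_mem _

lemma alpha_bracket (a : Fin k → K) (α : Module.Dual K (centIn K (Module.End K V) e))
    (hα : ∀ φ : centIn K (Module.End K V) e,
      α φ = ∑ i : Fin k, a i * b.repr ((φ : Module.End K V) (w i)) ⟨i, Fin.last (d i)⟩)
    (φ ψ : centIn K (Module.End K V) e) :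
    α ⁅φ, ψ⁆ = ∑ i : Fin k, a i *
      (b.repr ((φ : Module.End K V) ((ψ : Module.End K V) (w i))) ⟨i, Fin.last (d i)⟩
        - b.repr ((ψ : Module.End K V) ((φ : Module.End K V) (w i))) ⟨i, Fin.last (d i)⟩) := by
  rw [hα]
  refine Finset.sum_congr rfl fun i _ => ?_
  congr 1
  have hco : ((⁅φ, ψ⁆ : centIn K (Module.End K V) e) : Module.End K V) (w i)
      = (φ : Module.End K V) ((ψ : Module.End K V) (w i))
        - (ψ : Module.End K V) ((φ : Module.End K V) (w i)) := by
    rw [LieSubalgebra.coe_bracket, Ring.lie_def]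
    rfl
  rw [hco, map_sub, Finsupp.sub_apply]

include hb hnil in
lemma block_preserving_comm (φ ψ : centIn K (Module.End K V) e) (i : Fin k)
    (hφ : ∀ (j : Fin k) (q : Σ i : Fin k, Fin (d i + 1)), q.1 ≠ j →
      b.repr ((φ : Module.End K V) (w j)) q = 0) :
    b.repr ((φ : Module.End K V) ((ψ : Module.End K V) (w i))) ⟨i, Fin.last (d i)⟩
      = b.repr ((ψ : Module.End K V) ((φ : Module.End K V) (w i))) ⟨i, Fin.last (d i)⟩ := by
  rw [cent_coord b hb hnil φ _ i, cent_coord b hb hnil ψ _ i,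
    ← Finset.univ_sigma_univ, Finset.sum_sigma, Finset.sum_sigma]
  rw [Finset.sum_eq_single i (fun j _ hj => ?_) (by simp), Finset.sum_eq_single i (fun j _ hj => ?_) (by simp)]
  · -- main diagonal term
    have hrev : ∀ x : Fin (d i + 1), Fin.rev x = ⟨d i - (x : ℕ), by omega⟩ := fun x => by
      apply Fin.ext
      have hx := x.is_lt
      simp only [Fin.val_rev]
      omega
    refine Fintype.sum_bijective Fin.rev Fin.rev_bijective _ _ (fun x => ?_)
    rw [dif_pos (by omega : ((x : Fin (d i + 1)) : ℕ) ≤ d i),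
        dif_pos (by omega : ((Fin.rev x : Fin (d i + 1)) : ℕ) ≤ d i)]
    simp only [hrev x]
    have h1 : (⟨d i - (((⟨d i - (x : ℕ), by omega⟩ : Fin (d i + 1))) : ℕ), by omega⟩ : Fin (d i + 1)) = x := by
      apply Fin.ext
      have hx := x.is_lt
      show d i - (d i - (x : ℕ)) = (x : ℕ)
      omega
    simp only [h1]
    ring
  · -- RHS off-diagonal vanishes
    apply Finset.sum_eq_zero
    intro t _
    rw [hφ i ⟨j, t⟩ hj, zero_mul]
  · -- LHS off-diagonal vanishes
    apply Finset.sum_eq_zero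
    intro t _
    split_ifs with h
    · rw [hφ j ⟨i, ⟨d i - (t : ℕ), by omega⟩⟩ (Ne.symm hj), mul_zero]
    · rw [mul_zero]

include hb hnil in
lemma rel_lemma (a : Fin k → K) (α : Module.Dual K (centIn K (Module.End K V) e))
    (hα : ∀ φ : centIn K (Module.End K V) e,
      α φ = ∑ i : Fin k, a i * b.repr ((φ : Module.End K V) (w i)) ⟨i, Fin.last (d i)⟩)
    (φ : centIn K (Module.End K V) e) (hφ : ∀ ψ, α ⁅φ, ψ⁆ = 0)
    (i j : Fin k) (hij : j ≠ i) (c : ℕ) (hc : d i ≤ d j + c) :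
    a j * (if h : c ≤ d j then b.repr ((φ : Module.End K V) (w i)) ⟨j, ⟨d j - c, by omega⟩⟩ else 0)
      = a i * (if h : c ≤ d i then
          b.repr ((φ : Module.End K V) (w i)) ⟨j, ⟨d i - c, by omega⟩⟩ else 0) := by
  classical
  set ξ : Module.End K V :=
    Basis.constr b K (fun p : Σ i : Fin k, Fin (d i + 1) =>
      if p.1 = j then (e ^ ((p.2 : ℕ) + c)) (w i) else 0) with hξ
  have hξb : ∀ (m : Fin k) (s : Fin (d m + 1)),
      ξ (b ⟨m, s⟩) = if m = j then (e ^ ((s : ℕ) + c)) (w i) else 0 := by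
    intro m s
    rw [hξ, Basis.constr_basis]
  have hmem : ξ ∈ centIn K (Module.End K V) e := by
    show ⁅ξ, e⁆ = 0
    rw [Ring.lie_def, sub_eq_zero]
    apply b.ext
    rintro ⟨m, s⟩
    rw [Module.End.mul_apply, Module.End.mul_apply]
    have he : e (b ⟨m, s⟩) = (e ^ ((s : ℕ) + 1)) (w m) := by
      rw [hb m s, ← Module.End.mul_apply, ← pow_succ']
    rw [he, hξb m s, epow_w b hb hnil]
    by_cases h2 : m = j
    · subst h2
      rw [if_pos rfl]
      by_cases h1 : (s : ℕ) + 1 ≤ d m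
      · rw [dif_pos h1, hξb m ⟨(s : ℕ) + 1, by omega⟩, if_pos rfl]
        show (e ^ ((s : ℕ) + 1 + c)) (w i) = (e * e ^ ((s : ℕ) + c)) (w i)
        rw [show (s : ℕ) + 1 + c = (s : ℕ) + c + 1 from by omega, pow_succ']
      · rw [dif_neg h1, map_zero, ← Module.End.mul_apply, ← pow_succ',
          epow_w b hb hnil, dif_neg (by omega)]
    · rw [if_neg h2, map_zero]
      by_cases h1 : (s : ℕ) + 1 ≤ d m
      · rw [dif_pos h1, hξb m ⟨(s : ℕ) + 1, by omega⟩, if_neg h2]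
      · rw [dif_neg h1, map_zero]
  have hξw : ∀ m : Fin k, ξ (w m) = if m = j then (e ^ c) (w i) else 0 := by
    intro m
    have hw : w m = b ⟨m, (0 : Fin (d m + 1))⟩ := by
      rw [hb m 0]
      simp [pow_zero]
    rw [hw, hξb m 0]
    simp
  set Ψ : centIn K (Module.End K V) e := ⟨ξ, hmem⟩ with hΨ
  have hbr := hφ Ψ
  rw [alpha_bracket b a α hα φ Ψ] at hbr
  have hΨcoe : ∀ v : V, (Ψ : Module.End K V) v = ξ v := fun _ => rfl
  have hT1 : ∀ m : Fin k,
      b.repr ((φ : Module.End K V) ((Ψ : Module.End K V) (w m))) ⟨m, Fin.last (d m)⟩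
        = if m = j then (if h : c ≤ d j then
            b.repr ((φ : Module.End K V) (w i)) ⟨j, ⟨d j - c, by omega⟩⟩ else 0) else 0 := by
    intro m
    rw [hΨcoe, hξw m]
    by_cases h2 : m = j
    · subst h2
      rw [if_pos rfl, if_pos rfl, cent_comm φ c (w i), keyT b hb hnil]
    · rw [if_neg h2, if_neg h2, map_zero, map_zero, Finsupp.coe_zero, Pi.zero_apply]
  have hT2 : ∀ m : Fin k,
      b.repr ((Ψ : Module.End K V) ((φ : Module.End K V) (w m))) ⟨m, Fin.last (d m)⟩
        = if m = i then (if h : c ≤ d i then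
            b.repr ((φ : Module.End K V) (w i)) ⟨j, ⟨d i - c, by omega⟩⟩ else 0) else 0 := by
    intro m
    rw [hΨcoe, ← Basis.coord_apply]
    nth_rewrite 1 [← b.sum_repr ((φ : Module.End K V) (w m))]
    rw [map_sum, map_sum]
    have hterm : ∀ p : Σ i' : Fin k, Fin (d i' + 1),
        (b.coord ⟨m, Fin.last (d m)⟩) (ξ (b ⟨p.1, p.2⟩))
          = if p.1 = j ∧ (p.2 : ℕ) + c = d m ∧ i = m then 1 else 0 := by
      rintro ⟨p1, p2⟩
      rw [hξb p1 p2]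
      by_cases hp1 : p1 = j
      · rw [if_pos hp1, Basis.coord_apply, coord_epow_w b hb hnil]
        by_cases hrest : (p2 : ℕ) + c = d m ∧ i = m
        · rw [if_pos ⟨hrest.2, hrest.1⟩, if_pos ⟨hp1, hrest.1, hrest.2⟩]
        · rw [if_neg (fun hx => hrest ⟨hx.2, hx.1⟩), if_neg (fun hx => hrest ⟨hx.2.1, hx.2.2⟩)]
      · rw [if_neg hp1, map_zero, if_neg (fun hx => hp1 hx.1)]
    by_cases him : i = m
    · subst him
      rw [if_pos rfl]
      by_cases hci : c ≤ d i
      · rw [dif_pos hci]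
        rw [Finset.sum_eq_single (⟨j, ⟨d i - c, by omega⟩⟩ : Σ i' : Fin k, Fin (d i' + 1))]
        · simp only [map_smul, smul_eq_mul]
          rw [hterm ⟨j, ⟨d i - c, by omega⟩⟩,
            if_pos ⟨rfl, by simp; omega, rfl⟩, mul_one]
        · rintro ⟨q1, q2⟩ _ hne
          simp only [map_smul, smul_eq_mul]
          rw [hterm ⟨q1, q2⟩, if_neg, mul_zero]
          rintro ⟨rfl, hq2, -⟩
          apply hne
          congr 1
          apply Fin.ext
          show (q2 : ℕ) = d i - c
          change (q2 : ℕ) + c = d i at hq2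
          omega
        · intro hmem'
          exact absurd (Finset.mem_univ _) hmem'
      · rw [dif_neg hci]
        apply Finset.sum_eq_zero
        rintro ⟨q1, q2⟩ _
        simp only [map_smul, smul_eq_mul]
        rw [hterm ⟨q1, q2⟩, if_neg, mul_zero]
        rintro ⟨-, hq2, -⟩
        omega
    · rw [if_neg (fun hx => him hx.symm)]
      apply Finset.sum_eq_zero
      rintro ⟨q1, q2⟩ _
      simp only [map_smul, smul_eq_mul]
      rw [hterm ⟨q1, q2⟩, if_neg, mul_zero]
      rintro ⟨-, -, hx⟩
      exact him hx
  simp only [hT1, hT2, mul_sub, mul_ite, mul_zero] at hbr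
  rw [Finset.sum_sub_distrib, Finset.sum_ite_eq' Finset.univ j,
    Finset.sum_ite_eq' Finset.univ i] at hbr
  simp only [Finset.mem_univ, if_true] at hbr
  exact sub_eq_zero.mp hbr

include hb hnil in
lemma vanish (a : Fin k → K) (ha0 : ∀ i, a i ≠ 0) (hainj : Function.Injective a)
    (α : Module.Dual K (centIn K (Module.End K V) e))
    (hα : ∀ φ : centIn K (Module.End K V) e,
      α φ = ∑ i : Fin k, a i * b.repr ((φ : Module.End K V) (w i)) ⟨i, Fin.last (d i)⟩)
    (φ : centIn K (Module.End K V) e) (hφ : ∀ ψ, α ⁅φ, ψ⁆ = 0)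
    (i j : Fin k) (hij : j ≠ i) :
    ∀ (t : ℕ) (ht : t ≤ d j),
      b.repr ((φ : Module.End K V) (w i)) ⟨j, ⟨t, by omega⟩⟩ = 0 := by
  intro t
  induction t using Nat.strong_induction_on with
  | _ t IH =>
    intro ht
    rcases lt_trichotomy (d i) (d j) with hd | hd | hd
    · have hrel := rel_lemma b hb hnil a α hα φ hφ i j hij (d j - t) (by omega)
      rw [dif_pos (by omega : d j - t ≤ d j)] at hrel
      simp only [show d j - (d j - t) = t from by omega] at hrel
      by_cases h2 : d j - t ≤ d i
      · rw [dif_pos h2, IH (d i - (d j - t)) (by omega) (by omega), mul_zero] at hrel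
        exact (mul_eq_zero.mp hrel).resolve_left (ha0 j)
      · rw [dif_neg h2, mul_zero] at hrel
        exact (mul_eq_zero.mp hrel).resolve_left (ha0 j)
    · have hrel := rel_lemma b hb hnil a α hα φ hφ i j hij (d j - t) (by omega)
      rw [dif_pos (by omega : d j - t ≤ d j), dif_pos (by omega : d j - t ≤ d i)] at hrel
      simp only [show d j - (d j - t) = t from by omega,
        show d i - (d j - t) = t from by omega] at hrel
      have hne : a j - a i ≠ 0 := sub_ne_zero.mpr (fun h => hij (hainj h))
      have h3 : (a j - a i) *
          b.repr ((φ : Module.End K V) (w i)) ⟨j, ⟨t, by omega⟩⟩ = 0 := by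
        rw [sub_mul, hrel, sub_self]
      exact (mul_eq_zero.mp h3).resolve_left hne
    · have hrel := rel_lemma b hb hnil a α hα φ hφ i j hij (d i - t) (by omega)
      rw [dif_pos (by omega : d i - t ≤ d i)] at hrel
      simp only [show d i - (d i - t) = t from by omega] at hrel
      by_cases h2 : d i - t ≤ d j
      · rw [dif_pos h2, IH (d j - (d i - t)) (by omega) (by omega), mul_zero] at hrel
        exact (mul_eq_zero.mp hrel.symm).resolve_left (ha0 i)
      · rw [dif_neg h2, mul_zero] at hrel
        exact (mul_eq_zero.mp hrel.symm).resolve_left (ha0 i)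

end Aux

/-- for pairwise distinct nonzero `a₁, …, a_k` and
`α(φ) = Σᵢ aᵢ · cᵢ^{i,dᵢ}(φ)`, the coadjoint stabiliser `z(e)_α` consists exactly of the
elements of `z(e)` preserving each Jordan block subspace. -/
theorem stmt_4 (K V : Type*) [Field K] [AddCommGroup V] [Module K V]
    (e : Module.End K V) (k : ℕ) (d : Fin k → ℕ) (w : Fin k → V)
    (b : Basis (Σ i : Fin k, Fin (d i + 1)) K V)
    (hb : ∀ i (s : Fin (d i + 1)), b ⟨i, s⟩ = (e ^ (s : ℕ)) (w i))
    (hnil : ∀ i, (e ^ (d i + 1)) (w i) = 0)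
    (a : Fin k → K) (ha0 : ∀ i, a i ≠ 0) (hainj : Function.Injective a)
    (α : Module.Dual K (centIn K (Module.End K V) e))
    (hα : ∀ φ : centIn K (Module.End K V) e,
      α φ = ∑ i : Fin k, a i * b.repr ((φ : Module.End K V) (w i)) ⟨i, Fin.last (d i)⟩) :
    (coadStab K (centIn K (Module.End K V) e) α : Set (centIn K (Module.End K V) e)) =
      {φ : centIn K (Module.End K V) e | ∀ i : Fin k, (φ : Module.End K V) (w i) ∈
        Submodule.span K (Set.range fun s : Fin (d i + 1) => (e ^ (s : ℕ)) (w i))} := by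
  ext φ
  simp only [SetLike.mem_coe, Set.mem_setOf_eq]
  constructor
  · intro hφ i
    rw [mem_span_iff b hb i]
    rintro ⟨j, t⟩ hj
    exact vanish b hb hnil a ha0 hainj α hα φ (fun ψ => hφ ψ) i j hj (t : ℕ) (by omega)
  · intro hφ
    show ∀ ψ, α ⁅φ, ψ⁆ = 0
    intro ψ
    rw [alpha_bracket b a α hα φ ψ]
    apply Finset.sum_eq_zero
    intro i _
    rw [block_preserving_comm b hb hnil φ ψ i
      (fun j q hq => (mem_span_iff b hb j ((φ : Module.End K V) (w j))).mp (hφ j) q hq),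
      sub_self, mul_zero]
end

section
/- Let e ∈ sp(V) ⊂ gl(V) be nilpotent, where V is a 2n-dimensional symplectic vector space over a field K of characteristic ≠ 2 (with sufficiently many elements), with Jordan generators w_i chosen so that odd-height pairs (i,i') satisfy the standard pairing conditions. Let α ∈ z_{gl}(e)* be defined by α(φ) = Σᵢ aᵢ cᵢ^{i,dᵢ}(φ), with pairwise distinct nonzero aᵢ satisfying a_{i'} = −a_i for paired blocks. Then α vanishes on the (−1)-eigenspace z₁ of the involution σ(ξ) = −Jξᵗ J⁻¹ acting on z_{gl}(e). -/
/-!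
Write `cᵢ(s)` for the coordinate of `ψ wᵢ` along `eˢ wᵢ`. Only the blocks `j` and `p j` pair
nontrivially and `e` is skew, so `Ω(ψ wⱼ, eᵗ w_{p j}) = ∑ₛ (-1)ˢ cⱼ(s) Ω(wⱼ, e^{s+t} w_{p j})`;
self-adjointness of `ψ` compares this expression for `j = i` and `j = p i`. The Gram values
`Ω(wᵢ, eᵐ w_{p i})` vanish for `m > dᵢ` but not for `m = dᵢ`, so the resulting triangular system
forces `c_{p i}(s) = (-1)ˢ cᵢ(s)`. At `s = dᵢ` the summands `aᵢ cᵢ(dᵢ)` are therefore odd under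
the involution `p`: a fixed block has odd `dᵢ`, and a genuine pair has even `dᵢ` and
`a_{p i} = -aᵢ`.
-/

open Module Finset

theorem eq_zero_of_forall_sum_mul_add_eq_zero {R : Type*} [Ring R] [NoZeroDivisors R] {n : ℕ}
    {c g : ℕ → R} (hg : ∀ m, n < m → g m = 0) (hgn : g n ≠ 0)
    (h : ∀ t, ∑ s ∈ range (n + 1), c s * g (s + t) = 0) (s : ℕ) (hs : s ≤ n) : c s = 0 := by
  induction s using Nat.strong_induction_on with
  | _ s ih =>
    have hsingle := h (n - s)
    rw [sum_eq_single s] at hsingle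
    · rw [Nat.add_sub_cancel' hs] at hsingle
      exact (mul_eq_zero.mp hsingle).resolve_right hgn
    · intro s' hs' hne
      rcases Nat.lt_or_gt_of_ne hne with hlt | hgt
      · rw [ih s' hlt (by omega), zero_mul]
      · rw [hg _ (by omega), mul_zero]
    · intro hns
      exact absurd (mem_range.mpr (by omega)) hns

theorem Fintype.sum_eq_zero_of_involutive_of_apply_eq_neg {ι R : Type*} [Fintype ι] [Ring R]
    [NoZeroDivisors R] (h2 : (2 : R) ≠ 0) {p : ι → ι} (hp : Function.Involutive p) {f : ι → R}
    (hf : ∀ i, f (p i) = -f i) : ∑ i, f i = 0 := by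
  have hneg : ∑ i, f i = -∑ i, f i :=
    calc ∑ i, f i = ∑ i, f (p i) := (Equiv.sum_comp hp.toPerm f).symm
      _ = ∑ i, -f i := Fintype.sum_congr _ _ hf
      _ = -∑ i, f i := sum_neg_distrib _
  have h2sum : (2 : R) * ∑ i, f i = 0 := by
    rw [two_mul]; nth_rewrite 2 [hneg]; exact add_neg_cancel _
  exact (mul_eq_zero.mp h2sum).resolve_left h2

namespace LinearMap.BilinForm

variable {R M : Type*} [CommRing R] [AddCommGroup M] [Module R M] {B : LinearMap.BilinForm R M}
  {e : Module.End R M}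

theorem apply_pow_left_of_skew (he : ∀ v u, B (e v) u = -B v (e u)) (n : ℕ) (v u : M) :
    B ((e ^ n) v) u = (-1) ^ n * B v ((e ^ n) u) := by
  induction n generalizing v with
  | zero => simp
  | succ n ih =>
    rw [pow_succ e, Module.End.mul_apply, ih, he, ← Module.End.mul_apply e, ← pow_succ', pow_succ]
    ring

theorem apply_pow_right_of_skew (hB : ∀ v u, B v u = -B u v)
    (he : ∀ v u, B (e v) u = -B v (e u)) (n : ℕ) (v u : M) :
    B v ((e ^ n) u) = -(-1) ^ n * B u ((e ^ n) v) := by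
  rw [hB, apply_pow_left_of_skew he]
  ring

theorem apply_pow_of_selfAdjoint_of_commute (hB : ∀ v u, B v u = -B u v)
    (he : ∀ v u, B (e v) u = -B v (e u)) {ψ : Module.End R M} (hψ : ∀ v u, B (ψ v) u = B v (ψ u))
    (hψe : Commute ψ e) (n : ℕ) (v u : M) :
    B (ψ v) ((e ^ n) u) = -(-1) ^ n * B (ψ u) ((e ^ n) v) := by
  rw [hψ, ← Module.End.mul_apply, (hψe.pow_right n).eq, Module.End.mul_apply,
    apply_pow_right_of_skew hB he]

end LinearMap.BilinForm

section JordanBlocks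

variable {K V : Type*} [CommRing K] [AddCommGroup V] [Module K V] {k : ℕ} {d : Fin k → ℕ}

/-- The coordinate `cⱼ^{j,s}(x)` of `x` along `eˢ wⱼ`, indexed by `s : ℕ` and `0` for `s > d j`. -/
noncomputable def blockCoord (b : Basis (Σ i : Fin k, Fin (d i + 1)) K V) (x : V) (j : Fin k)
    (s : ℕ) : K :=
  if h : s < d j + 1 then b.repr x ⟨j, ⟨s, h⟩⟩ else 0

theorem blockCoord_fin (b : Basis (Σ i : Fin k, Fin (d i + 1)) K V) (x : V) (j : Fin k)
    (s : Fin (d j + 1)) : blockCoord b x j s = b.repr x ⟨j, s⟩ :=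
  dif_pos s.isLt

variable {Ω : LinearMap.BilinForm K V} {e : Module.End K V} {w : Fin k → V} {p : Fin k → Fin k}

theorem apply_pow_apply_pow_eq_zero_of_ne (hnil : ∀ i, (e ^ (d i + 1)) (w i) = 0)
    (horth : ∀ i j, j ≠ p i → ∀ (s : Fin (d i + 1)) (t : Fin (d j + 1)),
      Ω ((e ^ (s : ℕ)) (w i)) ((e ^ (t : ℕ)) (w j)) = 0)
    {i j : Fin k} (hij : j ≠ p i) (s t : ℕ) : Ω ((e ^ s) (w i)) ((e ^ t) (w j)) = 0 := by
  by_cases hs : s ≤ d i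
  · by_cases ht : t ≤ d j
    · exact horth i j hij ⟨s, by omega⟩ ⟨t, by omega⟩
    · rw [Module.End.pow_map_zero_of_le (by omega) (hnil j), map_zero]
  · rw [Module.End.pow_map_zero_of_le (by omega) (hnil i), map_zero, LinearMap.zero_apply]

theorem apply_pow_partner_eq_sum_blockCoord (b : Basis (Σ i : Fin k, Fin (d i + 1)) K V)
    (hb : ∀ i (s : Fin (d i + 1)), b ⟨i, s⟩ = (e ^ (s : ℕ)) (w i))
    (hnil : ∀ i, (e ^ (d i + 1)) (w i) = 0)
    (horth : ∀ i j, j ≠ p i → ∀ (s : Fin (d i + 1)) (t : Fin (d j + 1)),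
      Ω ((e ^ (s : ℕ)) (w i)) ((e ^ (t : ℕ)) (w j)) = 0)
    (hp : Function.Involutive p) (he : ∀ v u, Ω (e v) u = -Ω v (e u)) (x : V) (j : Fin k)
    (t : ℕ) :
    Ω x ((e ^ t) (w (p j))) = ∑ s ∈ range (d j + 1),
      blockCoord b x j s * (-1) ^ s * Ω (w j) ((e ^ (s + t)) (w (p j))) := by
  conv_lhs => rw [← b.sum_repr x]
  simp only [map_sum, LinearMap.sum_apply, map_smul, LinearMap.smul_apply, smul_eq_mul, hb]
  rw [Fintype.sum_sigma, Fintype.sum_eq_single j, ← Fin.sum_univ_eq_sum_range]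
  · refine Fintype.sum_congr _ _ fun s => ?_
    rw [blockCoord_fin, LinearMap.BilinForm.apply_pow_left_of_skew he, pow_add,
      Module.End.mul_apply, mul_assoc]
  · intro j' hj'
    refine Fintype.sum_eq_zero _ fun s => ?_
    rw [apply_pow_apply_pow_eq_zero_of_ne hnil horth (hp.injective.ne hj'.symm), mul_zero]

variable {ψ : Module.End K V}

theorem sum_blockCoord_sub_mul_apply_pow_eq_zero (b : Basis (Σ i : Fin k, Fin (d i + 1)) K V)
    (hb : ∀ i (s : Fin (d i + 1)), b ⟨i, s⟩ = (e ^ (s : ℕ)) (w i))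
    (hnil : ∀ i, (e ^ (d i + 1)) (w i) = 0)
    (horth : ∀ i j, j ≠ p i → ∀ (s : Fin (d i + 1)) (t : Fin (d j + 1)),
      Ω ((e ^ (s : ℕ)) (w i)) ((e ^ (t : ℕ)) (w j)) = 0)
    (hp : Function.Involutive p) (hpd : ∀ i, d (p i) = d i)
    (hΩskew : ∀ v u, Ω v u = -Ω u v) (he : ∀ v u, Ω (e v) u = -Ω v (e u))
    (hψ : ∀ v u, Ω (ψ v) u = Ω v (ψ u)) (hψe : Commute ψ e) (i : Fin k) (t : ℕ) :
    ∑ s ∈ range (d i + 1), ((-1) ^ s * blockCoord b (ψ (w i)) i s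
      - blockCoord b (ψ (w (p i))) (p i) s) * Ω (w i) ((e ^ (s + t)) (w (p i))) = 0 := by
  have hsym := LinearMap.BilinForm.apply_pow_of_selfAdjoint_of_commute hΩskew he hψ hψe t
    (w i) (w (p i))
  have hpartner := apply_pow_partner_eq_sum_blockCoord b hb hnil horth hp he (ψ (w (p i))) (p i) t
  rw [hp i, hpd i] at hpartner
  rw [apply_pow_partner_eq_sum_blockCoord b hb hnil horth hp he, hpartner, mul_sum] at hsym
  have hsq (n : ℕ) : (-1 : K) ^ n * (-1) ^ n = 1 := by
    rw [← mul_pow, neg_one_mul, neg_neg, one_pow]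
  simp only [sub_mul, sum_sub_distrib, sub_eq_zero]
  calc _ = _ := sum_congr rfl fun s _ => by ring
    _ = _ := hsym
    _ = _ := sum_congr rfl fun s _ => by
      rw [LinearMap.BilinForm.apply_pow_right_of_skew hΩskew he]
      linear_combination (blockCoord b (ψ (w (p i))) (p i) s * Ω (w i) ((e ^ (s + t)) (w (p i))))
        * ((-1) ^ t * (-1) ^ t * hsq s + hsq t)

theorem blockCoord_partner [NoZeroDivisors K] (b : Basis (Σ i : Fin k, Fin (d i + 1)) K V)
    (hb : ∀ i (s : Fin (d i + 1)), b ⟨i, s⟩ = (e ^ (s : ℕ)) (w i))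
    (hnil : ∀ i, (e ^ (d i + 1)) (w i) = 0)
    (horth : ∀ i j, j ≠ p i → ∀ (s : Fin (d i + 1)) (t : Fin (d j + 1)),
      Ω ((e ^ (s : ℕ)) (w i)) ((e ^ (t : ℕ)) (w j)) = 0)
    (hpair : ∀ i, Ω (w i) ((e ^ d i) (w (p i))) ≠ 0)
    (hp : Function.Involutive p) (hpd : ∀ i, d (p i) = d i)
    (hΩskew : ∀ v u, Ω v u = -Ω u v) (he : ∀ v u, Ω (e v) u = -Ω v (e u))
    (hψ : ∀ v u, Ω (ψ v) u = Ω v (ψ u)) (hψe : Commute ψ e) (i : Fin k) {s : ℕ} (hs : s ≤ d i) :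
    blockCoord b (ψ (w (p i))) (p i) s = (-1) ^ s * blockCoord b (ψ (w i)) i s := by
  have hgram (m : ℕ) (hm : d i < m) : Ω (w i) ((e ^ m) (w (p i))) = 0 := by
    rw [Module.End.pow_map_zero_of_le (by rw [hpd]; omega) (hnil (p i)), map_zero]
  exact (sub_eq_zero.mp (eq_zero_of_forall_sum_mul_add_eq_zero hgram (hpair i)
    (sum_blockCoord_sub_mul_apply_pow_eq_zero b hb hnil horth hp hpd hΩskew he hψ hψe i) s hs)).symm

end JordanBlocks

theorem stmt_7_general (K V : Type*) [Field K] [AddCommGroup V] [Module K V]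
    (hchar : (2 : K) ≠ 0)
    (Ω : LinearMap.BilinForm K V) (hΩskew : ∀ v u, Ω v u = -Ω u v)
    (e : Module.End K V) (he : ∀ v u, Ω (e v) u = -Ω v (e u))
    (k : ℕ) (d : Fin k → ℕ) (w : Fin k → V)
    (b : Basis (Σ i : Fin k, Fin (d i + 1)) K V)
    (hb : ∀ i (s : Fin (d i + 1)), b ⟨i, s⟩ = (e ^ (s : ℕ)) (w i))
    (hnil : ∀ i, (e ^ (d i + 1)) (w i) = 0)
    (p : Fin k → Fin k) (hp : ∀ i, p (p i) = i) (hpd : ∀ i, d (p i) = d i)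
    (hself : ∀ i, p i = i ↔ Odd (d i))
    (horth : ∀ i j, j ≠ p i → ∀ (s : Fin (d i + 1)) (t : Fin (d j + 1)),
      Ω ((e ^ (s : ℕ)) (w i)) ((e ^ (t : ℕ)) (w j)) = 0)
    (hpair : ∀ i, Ω (w i) ((e ^ d i) (w (p i))) ≠ 0)
    (a : Fin k → K)
    (hap : ∀ i, p i ≠ i → a (p i) = -a i)
    (ψ : Module.End K V) (hψe : ⁅ψ, e⁆ = 0)
    (hψ1 : ∀ v u, Ω (ψ v) u = Ω v (ψ u)) :
    ∑ i : Fin k, a i * b.repr (ψ (w i)) ⟨i, Fin.last (d i)⟩ = 0 := by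
  simp only [← blockCoord_fin, Fin.val_last]
  refine Fintype.sum_eq_zero_of_involutive_of_apply_eq_neg hchar hp fun i => ?_
  rw [hpd i, blockCoord_partner b hb hnil horth hpair hp hpd hΩskew he hψ1
    (commute_iff_lie_eq.mpr hψe) i le_rfl]
  by_cases hfix : p i = i
  · rw [hfix, ((hself i).mp hfix).neg_one_pow]
    ring
  · have heven : Even (d i) := Nat.not_odd_iff_even.mp (mt (hself i).mpr hfix)
    rw [hap i hfix, heven.neg_one_pow]
    ring

/-- for a nilpotent `e ∈ sp(V)` with Jordan generators arranged in the
standard way, the functional `α(φ) = Σᵢ aᵢ cᵢ^{i,dᵢ}(φ)` (with pairwise distinct nonzero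
`aᵢ`, `a_{i'} = -a_i` for paired odd-dimensional blocks) vanishes on the `(-1)`-eigenspace
`z₁` of the symplectic involution acting on `z_{gl}(e)`; elements of `z₁` are exactly the
`ψ` commuting with `e` such that `Ω(ψ v, u) = Ω(v, ψ u)`. -/
theorem stmt_7 (K V : Type*) [Field K] [AddCommGroup V] [Module K V]
    (hchar : (2 : K) ≠ 0)
    (Ω : LinearMap.BilinForm K V) (hΩskew : ∀ v u, Ω v u = -Ω u v)
    (hΩnd : Ω.Nondegenerate)
    (e : Module.End K V) (he : ∀ v u, Ω (e v) u = -Ω v (e u))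
    (k : ℕ) (d : Fin k → ℕ) (w : Fin k → V)
    (b : Basis (Σ i : Fin k, Fin (d i + 1)) K V)
    (hb : ∀ i (s : Fin (d i + 1)), b ⟨i, s⟩ = (e ^ (s : ℕ)) (w i))
    (hnil : ∀ i, (e ^ (d i + 1)) (w i) = 0)
    (p : Fin k → Fin k) (hp : ∀ i, p (p i) = i) (hpd : ∀ i, d (p i) = d i)
    (hself : ∀ i, p i = i ↔ Odd (d i))
    (horth : ∀ i j, j ≠ p i → ∀ (s : Fin (d i + 1)) (t : Fin (d j + 1)),
      Ω ((e ^ (s : ℕ)) (w i)) ((e ^ (t : ℕ)) (w j)) = 0)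
    (hpair : ∀ i, Ω (w i) ((e ^ d i) (w (p i))) ≠ 0)
    (a : Fin k → K) (ha0 : ∀ i, a i ≠ 0) (hainj : Function.Injective a)
    (hap : ∀ i, p i ≠ i → a (p i) = -a i)
    (ψ : Module.End K V) (hψe : ⁅ψ, e⁆ = 0)
    (hψ1 : ∀ v u, Ω (ψ v) u = Ω v (ψ u)) :
    ∑ i : Fin k, a i * b.repr (ψ (w i)) ⟨i, Fin.last (d i)⟩ = 0 :=
  stmt_7_general K V hchar Ω hΩskew e he k d w b hb hnil p hp hpd hself horth hpair a hap ψ hψe hψ1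
end

section
/- Let t ⊂ z(e) be the subalgebra spanned by the idempotent-like elements ξ_i^{i,0} for a nilpotent e ∈ gl_n(K) (K algebraically closed, characteristic zero). Then the normalizer of t in z(e) equals its centralizer in z(e), and both equal h = span{ξ_i^{i,s}}; consequently h equals its own normalizer in z(e). -/
open Module
attribute [local instance 100] LieRing.ofAssociativeRing

section Aux

variable {K V : Type*} [Field K] [AddCommGroup V] [Module K V]
  {e : Module.End K V} {k : ℕ} {d : Fin k → ℕ} {w : Fin k → V}

lemma aux_pow_zero (hnil : ∀ i, (e ^ (d i + 1)) (w i) = 0)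
    (m : Fin k) {t : ℕ} (ht : d m + 1 ≤ t) : (e ^ t) (w m) = 0 := by
  have h1 : e ^ t = e ^ (t - (d m + 1)) * e ^ (d m + 1) := by
    rw [← pow_add]; congr 1; omega
  rw [h1, Module.End.mul_apply, hnil, map_zero]

lemma aux_pow_pow (a c : ℕ) (v : V) :
    (e ^ a) ((e ^ c) v) = (e ^ (a + c)) v := by
  rw [pow_add, Module.End.mul_apply]

lemma aux_pow_one (c : ℕ) (v : V) :
    e ((e ^ c) v) = (e ^ (c + 1)) v := by
  rw [pow_succ', Module.End.mul_apply]

def diagIdx (d : Fin k → ℕ) (i : Fin k) (σ : Fin (d i + 1)) :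
    Σ i : Fin k, Σ j : Fin k, {s : ℕ // d j - d i ≤ s ∧ s ≤ d j} :=
  ⟨i, i, ⟨(σ : ℕ), by omega, by have := σ.isLt; omega⟩⟩

def σ0 (d : Fin k → ℕ) (m : Fin k) :
    {s : ℕ // d m - d m ≤ s ∧ s ≤ d m} := ⟨0, by omega⟩

variable {b : Basis (Σ i : Fin k, Fin (d i + 1)) K V}
  {ξ : (Σ i : Fin k, Σ j : Fin k, {s : ℕ // d j - d i ≤ s ∧ s ≤ d j}) → Module.End K V}

lemma aux_xi_apply
    (hnil : ∀ i, (e ^ (d i + 1)) (w i) = 0)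
    (hξ : ∀ (i j : Fin k) (s : {s : ℕ // d j - d i ≤ s ∧ s ≤ d j})
        (m : Fin k) (t : Fin (d m + 1)),
      ξ ⟨i, j, s⟩ ((e ^ (t : ℕ)) (w m)) = if m = i then (e ^ (s.1 + t)) (w j) else 0)
    (i j : Fin k) (s : {s : ℕ // d j - d i ≤ s ∧ s ≤ d j}) (m : Fin k) (t : ℕ) :
    ξ ⟨i, j, s⟩ ((e ^ t) (w m)) = if m = i then (e ^ (s.1 + t)) (w j) else 0 := by
  by_cases h : t ≤ d m
  · simpa using hξ i j s m ⟨t, by omega⟩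
  · rw [aux_pow_zero hnil m (by omega), map_zero]
    split
    · next hm =>
        subst hm
        have h1 := s.2.1
        rw [aux_pow_zero hnil j (by omega)]
    · rfl

lemma aux_xi_cent
    (hb : ∀ i (s : Fin (d i + 1)), b ⟨i, s⟩ = (e ^ (s : ℕ)) (w i))
    (hnil : ∀ i, (e ^ (d i + 1)) (w i) = 0)
    (hξ : ∀ (i j : Fin k) (s : {s : ℕ // d j - d i ≤ s ∧ s ≤ d j})
        (m : Fin k) (t : Fin (d m + 1)),
      ξ ⟨i, j, s⟩ ((e ^ (t : ℕ)) (w m)) = if m = i then (e ^ (s.1 + t)) (w j) else 0)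
    (i j : Fin k) (s : {s : ℕ // d j - d i ≤ s ∧ s ≤ d j}) :
    ⁅ξ ⟨i, j, s⟩, e⁆ = 0 := by
  rw [Ring.lie_def, sub_eq_zero]
  apply b.ext
  rintro ⟨m, t⟩
  rw [hb, Module.End.mul_apply, Module.End.mul_apply, aux_pow_one,
    aux_xi_apply hnil hξ, aux_xi_apply hnil hξ, apply_ite e, map_zero, aux_pow_one]
  split
  · rw [Nat.add_assoc]
  · rfl

lemma aux_diag_comm
    (hb : ∀ i (s : Fin (d i + 1)), b ⟨i, s⟩ = (e ^ (s : ℕ)) (w i))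
    (hnil : ∀ i, (e ^ (d i + 1)) (w i) = 0)
    (hξ : ∀ (i j : Fin k) (s : {s : ℕ // d j - d i ≤ s ∧ s ≤ d j})
        (m : Fin k) (t : Fin (d m + 1)),
      ξ ⟨i, j, s⟩ ((e ^ (t : ℕ)) (w m)) = if m = i then (e ^ (s.1 + t)) (w j) else 0)
    (i j : Fin k) (σ : {s : ℕ // d i - d i ≤ s ∧ s ≤ d i})
    (τ : {s : ℕ // d j - d j ≤ s ∧ s ≤ d j}) :
    ⁅ξ ⟨i, i, σ⟩, ξ ⟨j, j, τ⟩⁆ = 0 := by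
  rw [Ring.lie_def, sub_eq_zero]
  apply b.ext
  rintro ⟨m, t⟩
  rw [hb, Module.End.mul_apply, Module.End.mul_apply,
    aux_xi_apply hnil hξ, aux_xi_apply hnil hξ,
    apply_ite (ξ ⟨i, i, σ⟩), apply_ite (ξ ⟨j, j, τ⟩), map_zero, map_zero,
    aux_xi_apply hnil hξ, aux_xi_apply hnil hξ]
  by_cases hij : i = j
  · subst hij
    by_cases hm : m = i
    · subst hm
      simp only [if_pos rfl]
      have : σ.1 + (τ.1 + (t : ℕ)) = τ.1 + (σ.1 + (t : ℕ)) := by omega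
      rw [this]
    · simp [hm]
  · simp [hij, Ne.symm hij]

lemma aux_h_repr
    (hb : ∀ i (s : Fin (d i + 1)), b ⟨i, s⟩ = (e ^ (s : ℕ)) (w i))
    (hnil : ∀ i, (e ^ (d i + 1)) (w i) = 0)
    (hξ : ∀ (i j : Fin k) (s : {s : ℕ // d j - d i ≤ s ∧ s ≤ d j})
        (m : Fin k) (t : Fin (d m + 1)),
      ξ ⟨i, j, s⟩ ((e ^ (t : ℕ)) (w m)) = if m = i then (e ^ (s.1 + t)) (w j) else 0)
    {y : Module.End K V}
    (hy : y ∈ Submodule.span K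
      (ξ '' {q : Σ i : Fin k, Σ j : Fin k, {s : ℕ // d j - d i ≤ s ∧ s ≤ d j} | q.2.1 = q.1}))
    (p m : Fin k) (hpm : m ≠ p) (s : Fin (d m + 1)) :
    b.repr (y (w p)) ⟨m, s⟩ = 0 := by
  induction hy using Submodule.span_induction with
  | mem z hz =>
      obtain ⟨⟨i, j, σ⟩, hq, rfl⟩ := hz
      obtain rfl : i = j := hq.symm
      have hw : w p = (e ^ (0 : ℕ)) (w p) := by simp
      rw [hw, aux_xi_apply hnil hξ]
      by_cases hpi : p = i
      · rw [if_pos hpi]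
        have hlt : σ.1 + 0 < d i + 1 := by have := σ.2.2; omega
        have hbb : (e ^ (σ.1 + 0)) (w i) = b ⟨i, ⟨σ.1 + 0, hlt⟩⟩ := by
          rw [hb]
        rw [hbb, b.repr_self, Finsupp.single_apply,
          if_neg (fun hc => hpm ((hpi.trans (congrArg Sigma.fst hc)).symm))]
      · rw [if_neg hpi, map_zero]
        simp
  | zero => simp
  | add a b' _ _ ha hbb => simp [LinearMap.add_apply, ha, hbb]
  | smul c a _ ha => simp [ha]

lemma aux_xi_diag_repr
    (hb : ∀ i (s : Fin (d i + 1)), b ⟨i, s⟩ = (e ^ (s : ℕ)) (w i))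
    (hnil : ∀ i, (e ^ (d i + 1)) (w i) = 0)
    (hξ : ∀ (i j : Fin k) (s : {s : ℕ // d j - d i ≤ s ∧ s ≤ d j})
        (m : Fin k) (t : Fin (d m + 1)),
      ξ ⟨i, j, s⟩ ((e ^ (t : ℕ)) (w m)) = if m = i then (e ^ (s.1 + t)) (w j) else 0)
    (m : Fin k) (s : Fin (d m + 1)) (v : V) :
    b.repr (ξ ⟨m, m, σ0 d m⟩ v) ⟨m, s⟩ = b.repr v ⟨m, s⟩ := by
  have key : (Finsupp.lapply (⟨m, s⟩ : Σ i : Fin k, Fin (d i + 1))).comp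
      ((b.repr.toLinearMap).comp (ξ ⟨m, m, σ0 d m⟩)) =
      (Finsupp.lapply (⟨m, s⟩ : Σ i : Fin k, Fin (d i + 1))).comp b.repr.toLinearMap := by
    apply b.ext
    rintro ⟨j, t⟩
    simp only [LinearMap.coe_comp, Function.comp_apply, LinearEquiv.coe_coe,
      Finsupp.lapply_apply]
    rw [hb, aux_xi_apply hnil hξ]
    by_cases hjm : j = m
    · subst hjm
      rw [if_pos rfl]
      have h0 : (σ0 d j).1 + (t : ℕ) = (t : ℕ) := by simp [σ0]
      rw [h0, ← hb]
    · rw [if_neg hjm, map_zero, Finsupp.coe_zero, Pi.zero_apply, ← hb, b.repr_self,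
        Finsupp.single_apply, if_neg]
      intro hc
      exact hjm (congrArg Sigma.fst hc)
  exact LinearMap.congr_fun key v

lemma aux_diag_mem
    (hb : ∀ i (s : Fin (d i + 1)), b ⟨i, s⟩ = (e ^ (s : ℕ)) (w i))
    (hnil : ∀ i, (e ^ (d i + 1)) (w i) = 0)
    (hξ : ∀ (i j : Fin k) (s : {s : ℕ // d j - d i ≤ s ∧ s ≤ d j})
        (m : Fin k) (t : Fin (d m + 1)),
      ξ ⟨i, j, s⟩ ((e ^ (t : ℕ)) (w m)) = if m = i then (e ^ (s.1 + t)) (w j) else 0)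
    {x : Module.End K V} (hxe : ⁅x, e⁆ = 0)
    (hoff : ∀ (p j : Fin k), j ≠ p → ∀ s : Fin (d j + 1), b.repr (x (w p)) ⟨j, s⟩ = 0) :
    x ∈ Submodule.span K
      (ξ '' {q : Σ i : Fin k, Σ j : Fin k, {s : ℕ // d j - d i ≤ s ∧ s ≤ d j} | q.2.1 = q.1}) := by
  have hcomm : ∀ (n : ℕ) (v : V), x ((e ^ n) v) = (e ^ n) (x v) := by
    have hc : Commute x e := by rwa [Ring.lie_def, sub_eq_zero] at hxe
    intro n v
    calc x ((e ^ n) v) = (x * e ^ n) v := rfl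
      _ = (e ^ n * x) v := by rw [(hc.pow_right n).eq]
      _ = (e ^ n) (x v) := rfl
  have hdia : ∀ (i : Fin k) (σ : Fin (d i + 1)) (m : Fin k) (n : ℕ),
      ξ (diagIdx d i σ) ((e ^ n) (w m)) =
        if m = i then (e ^ ((σ : ℕ) + n)) (w i) else 0 := by
    intro i σ m n
    simp only [diagIdx]
    exact aux_xi_apply hnil hξ i i _ m n
  have hxeq : x = ∑ i : Fin k, ∑ σ : Fin (d i + 1),
      b.repr (x (w i)) ⟨i, σ⟩ • ξ (diagIdx d i σ) := by
    apply b.ext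
    rintro ⟨m, t⟩
    rw [hb, hcomm]
    conv_lhs => rw [← b.sum_repr (x (w m))]
    rw [map_sum, ← Finset.univ_sigma_univ, Finset.sum_sigma]
    rw [Fintype.sum_eq_single m (fun j hj => Finset.sum_eq_zero
      (fun σ _ => by rw [hoff m j hj σ, zero_smul, map_zero]))]
    rw [LinearMap.sum_apply, Fintype.sum_eq_single m (fun i hi => by
      rw [LinearMap.sum_apply]
      refine Finset.sum_eq_zero fun σ _ => ?_
      rw [LinearMap.smul_apply, hdia, if_neg hi.symm, smul_zero]
      )]
    rw [LinearMap.sum_apply]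
    refine Finset.sum_congr rfl fun σ _ => ?_
    rw [LinearMap.smul_apply, hdia, if_pos rfl]
    rw [map_smul, hb, aux_pow_pow, Nat.add_comm]
  rw [hxeq]
  exact Submodule.sum_mem _ fun i _ => Submodule.sum_mem _ fun σ _ =>
    Submodule.smul_mem _ _ (Submodule.subset_span ⟨diagIdx d i σ, rfl, rfl⟩)

end Aux

/-- for `t = span{ξ_i^{i,0}}` the normaliser of `t` in `z(e)` equals the
centraliser of `t` in `z(e)`, and both equal `h = span{ξ_i^{i,s}}`; consequently `h` is
self-normalising in `z(e)`. -/
theorem stmt_18 (K V : Type*) [Field K] [IsAlgClosed K] [CharZero K]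
    [AddCommGroup V] [Module K V]
    (e : Module.End K V) (k : ℕ) (d : Fin k → ℕ) (w : Fin k → V)
    (b : Basis (Σ i : Fin k, Fin (d i + 1)) K V)
    (hb : ∀ i (s : Fin (d i + 1)), b ⟨i, s⟩ = (e ^ (s : ℕ)) (w i))
    (hnil : ∀ i, (e ^ (d i + 1)) (w i) = 0)
    (ξ : (Σ i : Fin k, Σ j : Fin k, {s : ℕ // d j - d i ≤ s ∧ s ≤ d j}) → Module.End K V)
    (hξ : ∀ (i j : Fin k) (s : {s : ℕ // d j - d i ≤ s ∧ s ≤ d j})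
        (m : Fin k) (t : Fin (d m + 1)),
      ξ ⟨i, j, s⟩ ((e ^ (t : ℕ)) (w m)) = if m = i then (e ^ (s.1 + t)) (w j) else 0)
    (t h : Submodule K (Module.End K V))
    (ht : t = Submodule.span K
      (ξ '' {q : Σ i : Fin k, Σ j : Fin k, {s : ℕ // d j - d i ≤ s ∧ s ≤ d j} |
        q.2.1 = q.1 ∧ q.2.2.1 = 0}))
    (hh : h = Submodule.span K
      (ξ '' {q : Σ i : Fin k, Σ j : Fin k, {s : ℕ // d j - d i ≤ s ∧ s ≤ d j} | q.2.1 = q.1})) :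
    {x : Module.End K V | x ∈ centIn K (Module.End K V) e ∧ ∀ y ∈ t, ⁅x, y⁆ ∈ t} =
      (h : Set (Module.End K V)) ∧
    {x : Module.End K V | x ∈ centIn K (Module.End K V) e ∧ ∀ y ∈ t, ⁅x, y⁆ = 0} =
      (h : Set (Module.End K V)) ∧
    {x : Module.End K V | x ∈ centIn K (Module.End K V) e ∧ ∀ y ∈ h, ⁅x, y⁆ ∈ h} =
      (h : Set (Module.End K V)) := by
  subst ht hh
  set Sh := ξ '' {q : Σ i : Fin k, Σ j : Fin k, {s : ℕ // d j - d i ≤ s ∧ s ≤ d j} |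
      q.2.1 = q.1} with hSh
  set St := ξ '' {q : Σ i : Fin k, Σ j : Fin k, {s : ℕ // d j - d i ≤ s ∧ s ≤ d j} |
      q.2.1 = q.1 ∧ q.2.2.1 = 0} with hSt
  -- membership in centIn is the bracket condition
  have hcentIn : ∀ x : Module.End K V, x ∈ centIn K (Module.End K V) e ↔ ⁅x, e⁆ = 0 := by
    intro x; rfl
  -- every element of h commutes with e
  have hcent : ∀ x ∈ Submodule.span K Sh, ⁅x, e⁆ = 0 := by
    intro x hx
    induction hx using Submodule.span_induction with
    | mem z hz =>
        obtain ⟨⟨i, j, σ⟩, hq, rfl⟩ := hz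
        exact aux_xi_cent hb hnil hξ i j σ
    | zero => simp
    | add a b' _ _ ha hb' => rw [add_lie, ha, hb', add_zero]
    | smul r a _ ha => rw [smul_lie, ha, smul_zero]
  -- h is abelian
  have habel : ∀ x ∈ Submodule.span K Sh, ∀ y ∈ Submodule.span K Sh, ⁅x, y⁆ = 0 := by
    intro x hx
    induction hx using Submodule.span_induction with
    | mem z hz =>
        obtain ⟨⟨i, j, σ⟩, hq, rfl⟩ := hz
        obtain rfl : i = j := hq.symm
        intro y hy
        induction hy using Submodule.span_induction with
        | mem z' hz' =>
            obtain ⟨⟨i', j', τ⟩, hq', rfl⟩ := hz'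
            obtain rfl : i' = j' := hq'.symm
            exact aux_diag_comm hb hnil hξ i i' σ τ
        | zero => simp
        | add a b' _ _ ha hb' => rw [lie_add, ha, hb', add_zero]
        | smul r a _ ha => rw [lie_smul, ha, smul_zero]
    | zero => intro y hy; simp
    | add a b' _ _ ha hb' => intro y hy; rw [add_lie, ha y hy, hb' y hy, add_zero]
    | smul r a _ ha => intro y hy; rw [smul_lie, ha y hy, smul_zero]
  have tsubh : Submodule.span K St ≤ Submodule.span K Sh :=
    Submodule.span_mono (Set.image_mono fun q hq => hq.1)
  have hmm0t : ∀ m : Fin k, ξ ⟨m, m, σ0 d m⟩ ∈ Submodule.span K St :=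
    fun m => Submodule.subset_span ⟨⟨m, m, σ0 d m⟩, ⟨rfl, rfl⟩, rfl⟩
  -- the key reverse inclusion
  have hkey : ∀ x : Module.End K V, ⁅x, e⁆ = 0 →
      (∀ m, ⁅x, ξ ⟨m, m, σ0 d m⟩⁆ ∈ Submodule.span K Sh) →
      x ∈ Submodule.span K Sh := by
    intro x hxe hbr
    apply aux_diag_mem hb hnil hξ hxe
    intro p j hjp s
    have h1 := aux_h_repr hb hnil hξ (hbr j) p j hjp s
    have h2 : ⁅x, ξ ⟨j, j, σ0 d j⟩⁆ (w p)
        = x (ξ ⟨j, j, σ0 d j⟩ (w p)) - ξ ⟨j, j, σ0 d j⟩ (x (w p)) := rfl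
    have h3 : ξ ⟨j, j, σ0 d j⟩ (w p) = 0 := by
      have hw : w p = (e ^ (0 : ℕ)) (w p) := by simp
      rw [hw, aux_xi_apply hnil hξ, if_neg (fun hc => hjp hc.symm)]
    rw [h2, h3, map_zero, zero_sub, map_neg, Finsupp.neg_apply, neg_eq_zero,
      aux_xi_diag_repr hb hnil hξ j s (x (w p))] at h1
    exact h1
  refine ⟨?_, ?_, ?_⟩
  · ext x
    simp only [Set.mem_setOf_eq, SetLike.mem_coe, hcentIn]
    constructor
    · rintro ⟨hxe, hn⟩
      exact hkey x hxe fun m => tsubh (hn _ (hmm0t m))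
    · intro hx
      exact ⟨hcent x hx, fun y hy => by
        rw [habel x hx y (tsubh hy)]; exact Submodule.zero_mem _⟩
  · ext x
    simp only [Set.mem_setOf_eq, SetLike.mem_coe, hcentIn]
    constructor
    · rintro ⟨hxe, hn⟩
      refine hkey x hxe fun m => ?_
      rw [hn _ (hmm0t m)]
      exact Submodule.zero_mem _
    · intro hx
      exact ⟨hcent x hx, fun y hy => habel x hx y (tsubh hy)⟩
  · ext x
    simp only [Set.mem_setOf_eq, SetLike.mem_coe, hcentIn]
    constructor
    · rintro ⟨hxe, hn⟩
      exact hkey x hxe fun m => hn _ (tsubh (hmm0t m))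
    · intro hx
      exact ⟨hcent x hx, fun y hy => by
        rw [habel x hx y hy]; exact Submodule.zero_mem _⟩
end
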